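/- Let 𝒳 = (X, o, μ) be a boundedly compact pmm space. Then (i) the curve t ↦ B̄_t(o) of closed balls is càdlàg with respect to the Hausdorff distance on compact subsets of X, and its left limit at t = r is the closure of the open ball B_r(o); (ii) the curve t ↦ μ|_{B̄_t(o)} is càdlàg with respect to the Prokhorov distance on finite Borel measures on X, and its left limit at t = r is μ|_{B_r(o)}. -/
import Mathlib


open MeasureTheory Topology Filter

noncomputable section

/-- Prokhorov distance between finite Borel measures on a metric space. -/
def prokhorovDist {Z : Type*} [MetricSpace Z] [MeasurableSpace Z]
    (μ ν : Measure Z) : ℝ :=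
  sInf {ε : ℝ | 0 < ε ∧ ∀ A : Set Z, IsClosed A →
    μ A ≤ ν (Metric.cthickening ε A) + ENNReal.ofReal ε ∧
    ν A ≤ μ (Metric.cthickening ε A) + ENNReal.ofReal ε}

lemma prokhorovDist_nonneg' {Z : Type*} [MetricSpace Z] [MeasurableSpace Z]
    (μ ν : Measure Z) : 0 ≤ prokhorovDist μ ν :=
  Real.sInf_nonneg fun _ hx => hx.1.le

lemma prokhorovDist_le' {Z : Type*} [MetricSpace Z] [MeasurableSpace Z]
    {μ ν : Measure Z} {ε : ℝ} (hε : 0 < ε)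
    (h : ∀ A : Set Z, IsClosed A →
      μ A ≤ ν (Metric.cthickening ε A) + ENNReal.ofReal ε ∧
      ν A ≤ μ (Metric.cthickening ε A) + ENNReal.ofReal ε) :
    prokhorovDist μ ν ≤ ε :=
  csInf_le ⟨0, fun _ hx => hx.1.le⟩ ⟨hε, h⟩

lemma restrict_pair' {X : Type*} [MetricSpace X] [MeasurableSpace X] [BorelSpace X]
    (μ : Measure X) {s t : Set X} (hs : MeasurableSet s) (_ht : MeasurableSet t)
    (hst : s ⊆ t) {ε : ℝ} (_hε : 0 < ε) (hfin : μ s ≠ ⊤)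
    (hμ : μ t ≤ μ s + ENNReal.ofReal ε) (A : Set X) (hA : IsClosed A) :
    μ.restrict t A ≤ μ.restrict s (Metric.cthickening ε A) + ENNReal.ofReal ε ∧
    μ.restrict s A ≤ μ.restrict t (Metric.cthickening ε A) + ENNReal.ofReal ε := by
  have hAm := hA.measurableSet
  have hCm := (Metric.isClosed_cthickening (δ := ε) (E := A)).measurableSet
  rw [Measure.restrict_apply hAm, Measure.restrict_apply hAm,
    Measure.restrict_apply hCm, Measure.restrict_apply hCm]
  constructor
  · have h1 : A ∩ t ⊆ (Metric.cthickening ε A ∩ s) ∪ (t \ s) := by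
      intro x hx
      by_cases hxs : x ∈ s
      · exact Or.inl ⟨Metric.self_subset_cthickening A hx.1, hxs⟩
      · exact Or.inr ⟨hx.2, hxs⟩
    calc μ (A ∩ t) ≤ μ (Metric.cthickening ε A ∩ s) + μ (t \ s) :=
          le_trans (measure_mono h1) (measure_union_le _ _)
      _ ≤ μ (Metric.cthickening ε A ∩ s) + ENNReal.ofReal ε := by
          gcongr
          rw [measure_diff hst hs.nullMeasurableSet hfin]
          exact tsub_le_iff_right.2 (hμ.trans_eq (add_comm _ _))
  · calc μ (A ∩ s) ≤ μ (Metric.cthickening ε A ∩ t) :=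
          measure_mono (Set.inter_subset_inter (Metric.self_subset_cthickening A) hst)
      _ ≤ _ := le_self_add

lemma iInter_closedBall' {X : Type*} [MetricSpace X] (o : X) (r : ℝ) :
    ⋂ n : ℕ, Metric.closedBall o (r + 1/((n : ℝ)+1)) = Metric.closedBall o r := by
  ext x
  simp only [Set.mem_iInter, Metric.mem_closedBall]
  constructor
  · intro h
    refine le_of_forall_pos_le_add fun ε hε => ?_
    obtain ⟨n, hn⟩ := exists_nat_one_div_lt hε
    exact (h n).trans (by linarith)
  · intro h n
    have : (0:ℝ) < 1/((n:ℝ)+1) := by positivity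
    linarith

lemma exists_le_sub' {r d : ℝ} (hr : 0 < r) (hd : d < r) :
    ∃ n : ℕ, d ≤ r - r/((n:ℝ)+1) := by
  obtain ⟨n, hn⟩ := exists_nat_one_div_lt (div_pos (sub_pos.2 hd) hr)
  refine ⟨n, ?_⟩
  have h2 := (div_lt_div_iff₀ (by positivity : (0:ℝ) < (n:ℝ)+1) hr).1 hn
  have h3 : r / ((n:ℝ)+1) < r - d := by
    rw [div_lt_iff₀ (by positivity : (0:ℝ) < (n:ℝ)+1)]
    linarith
  linarith

lemma tseq_bounds' {r : ℝ} (hr : 0 < r) (n : ℕ) :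
    0 ≤ r - r/((n:ℝ)+1) ∧ r - r/((n:ℝ)+1) < r := by
  constructor
  · have : r/((n:ℝ)+1) ≤ r := by
      rw [div_le_iff₀ (by positivity : (0:ℝ) < (n:ℝ)+1)]
      nlinarith [Nat.cast_nonneg (α := ℝ) n]
    linarith
  · have : (0:ℝ) < r/((n:ℝ)+1) := by positivity
    linarith

lemma iUnion_closedBall' {X : Type*} [MetricSpace X] (o : X) {r : ℝ} (hr : 0 < r) :
    ⋃ n : ℕ, Metric.closedBall o (r - r/((n:ℝ)+1)) = Metric.ball o r := by
  ext x
  simp only [Set.mem_iUnion, Metric.mem_closedBall, Metric.mem_ball]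
  constructor
  · rintro ⟨n, hn⟩
    have := (tseq_bounds' hr n).2
    linarith
  · intro h
    obtain ⟨n, hn⟩ := exists_le_sub' hr h
    exact ⟨n, hn⟩

lemma exists_delta_subset_thickening' {X : Type*} [MetricSpace X] (o : X)
    (hcompact : ∀ (x : X) (r : ℝ), IsCompact (Metric.closedBall x r))
    (r : ℝ) {ε : ℝ} (hε : 0 < ε) :
    ∃ δ > 0, Metric.closedBall o (r + δ) ⊆ Metric.thickening ε (Metric.closedBall o r) := by
  by_contra h
  push_neg at h
  set K : ℕ → Set X := fun n =>
    Metric.closedBall o (r + 1/((n:ℝ)+1)) \ Metric.thickening ε (Metric.closedBall o r) with hK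
  have hcl : ∀ n, IsClosed (K n) := fun n =>
    Metric.isClosed_closedBall.sdiff Metric.isOpen_thickening
  have hne : ∀ n, (K n).Nonempty := by
    intro n
    obtain ⟨x, hx1, hx2⟩ := Set.not_subset.1 (h _ (by positivity : (0:ℝ) < 1/((n:ℝ)+1)))
    exact ⟨x, hx1, hx2⟩
  have hsub : ∀ n, K (n+1) ⊆ K n := by
    intro n
    apply Set.diff_subset_diff_left
    apply Metric.closedBall_subset_closedBall
    have : 1/((n:ℝ)+1+1) ≤ 1/((n:ℝ)+1) :=
      div_le_div_of_nonneg_left zero_le_one (by positivity) (by linarith)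
    push_cast
    linarith
  have h0 : IsCompact (K 0) := by
    apply (hcompact o (r+1)).of_isClosed_subset (hcl 0)
    refine Set.diff_subset.trans (Metric.closedBall_subset_closedBall ?_)
    norm_num
  obtain ⟨x, hx⟩ :=
    IsCompact.nonempty_iInter_of_sequence_nonempty_isCompact_isClosed K hsub hne h0 hcl
  simp only [Set.mem_iInter] at hx
  have hxr : x ∈ Metric.closedBall o r := by
    rw [Metric.mem_closedBall]
    refine le_of_forall_pos_le_add fun η hη => ?_
    obtain ⟨n, hn⟩ := exists_nat_one_div_lt hη
    exact (Metric.mem_closedBall.1 (hx n).1).trans (by linarith)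
  exact (hx 0).2 (Metric.self_subset_thickening hε _ hxr)

lemma exists_t0_closure_ball' {X : Type*} [MetricSpace X] (o : X)
    (hcompact : ∀ (x : X) (r : ℝ), IsCompact (Metric.closedBall x r))
    {r ε : ℝ} (hr : 0 < r) (hε : 0 < ε) :
    ∃ t0, 0 ≤ t0 ∧ t0 < r ∧
      closure (Metric.ball o r) ⊆ Metric.thickening ε (Metric.closedBall o t0) := by
  by_contra h
  push_neg at h
  set K : ℕ → Set X := fun n =>
    closure (Metric.ball o r) \ Metric.thickening ε (Metric.closedBall o (r - r/((n:ℝ)+1))) with hK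
  have hcl : ∀ n, IsClosed (K n) := fun n =>
    isClosed_closure.sdiff Metric.isOpen_thickening
  have hne : ∀ n, (K n).Nonempty := by
    intro n
    obtain ⟨x, hx1, hx2⟩ :=
      Set.not_subset.1 (h _ (tseq_bounds' hr n).1 (tseq_bounds' hr n).2)
    exact ⟨x, hx1, hx2⟩
  have hsub : ∀ n, K (n+1) ⊆ K n := by
    intro n
    apply Set.diff_subset_diff_right
    apply Metric.thickening_subset_of_subset
    apply Metric.closedBall_subset_closedBall
    have : r/((n:ℝ)+1+1) ≤ r/((n:ℝ)+1) :=
      div_le_div_of_nonneg_left hr.le (by positivity) (by linarith)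
    push_cast
    linarith
  have h0 : IsCompact (K 0) :=
    (hcompact o r).of_isClosed_subset (hcl 0)
      (Set.diff_subset.trans Metric.closure_ball_subset_closedBall)
  obtain ⟨x, hx⟩ :=
    IsCompact.nonempty_iInter_of_sequence_nonempty_isCompact_isClosed K hsub hne h0 hcl
  simp only [Set.mem_iInter] at hx
  obtain ⟨y, hy, hxy⟩ := Metric.mem_closure_iff.1 (hx 0).1 ε hε
  obtain ⟨n, hn⟩ := exists_le_sub' hr (Metric.mem_ball.1 hy)
  exact (hx n).2 (Metric.mem_thickening_iff.2 ⟨y, Metric.mem_closedBall.2 hn, hxy⟩)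

lemma exists_delta_measure' {X : Type*} [MetricSpace X] [MeasurableSpace X] [BorelSpace X]
    (o : X) (μ : Measure X) (hfinite : ∀ (x : X) (r : ℝ), μ (Metric.closedBall x r) ≠ ⊤)
    (r : ℝ) {ε : ℝ} (hε : 0 < ε) :
    ∃ δ > 0, μ (Metric.closedBall o (r + δ)) ≤ μ (Metric.closedBall o r) + ENNReal.ofReal ε := by
  have hanti : Antitone (fun n : ℕ => Metric.closedBall o (r + 1/((n:ℝ)+1))) := by
    intro m n hmn
    apply Metric.closedBall_subset_closedBall
    have hc : (m:ℝ) ≤ (n:ℝ) := Nat.cast_le.2 hmn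
    have : 1/((n:ℝ)+1) ≤ 1/((m:ℝ)+1) :=
      div_le_div_of_nonneg_left zero_le_one (by positivity) (by linarith)
    linarith
  have htend := tendsto_measure_iInter_atTop (μ := μ)
    (s := fun n : ℕ => Metric.closedBall o (r + 1/((n:ℝ)+1)))
    (fun _ => Metric.isClosed_closedBall.measurableSet.nullMeasurableSet) hanti
    ⟨0, hfinite o _⟩
  rw [iInter_closedBall' o r] at htend
  have hlt : μ (Metric.closedBall o r) < μ (Metric.closedBall o r) + ENNReal.ofReal ε :=
    ENNReal.lt_add_right (hfinite o r) (ENNReal.ofReal_pos.2 hε).ne'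
  obtain ⟨n, hn⟩ := ((tendsto_order.1 htend).2 _ hlt).exists
  exact ⟨1/((n:ℝ)+1), by positivity, hn.le⟩

lemma exists_t0_measure' {X : Type*} [MetricSpace X] [MeasurableSpace X] [BorelSpace X]
    (o : X) (μ : Measure X) (hfinite : ∀ (x : X) (r : ℝ), μ (Metric.closedBall x r) ≠ ⊤)
    {r ε : ℝ} (hr : 0 < r) (hε : 0 < ε) :
    ∃ t0, 0 ≤ t0 ∧ t0 < r ∧
      μ (Metric.ball o r) ≤ μ (Metric.closedBall o t0) + ENNReal.ofReal ε := by
  have hmono : Monotone (fun n : ℕ => Metric.closedBall o (r - r/((n:ℝ)+1))) := by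
    intro m n hmn
    apply Metric.closedBall_subset_closedBall
    have hc : (m:ℝ) ≤ (n:ℝ) := Nat.cast_le.2 hmn
    have : r/((n:ℝ)+1) ≤ r/((m:ℝ)+1) :=
      div_le_div_of_nonneg_left hr.le (by positivity) (by linarith)
    linarith
  have htend := tendsto_measure_iUnion_atTop (μ := μ) hmono
  rw [iUnion_closedBall' o hr] at htend
  by_cases hsmall : μ (Metric.ball o r) ≤ ENNReal.ofReal ε
  · exact ⟨0, le_refl 0, hr, hsmall.trans le_add_self⟩
  · push_neg at hsmall
    have hfin : μ (Metric.ball o r) ≠ ⊤ :=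
      ne_top_of_le_ne_top (hfinite o r) (measure_mono Metric.ball_subset_closedBall)
    have hne0 : μ (Metric.ball o r) ≠ 0 :=
      (lt_of_lt_of_le (ENNReal.ofReal_pos.2 hε) hsmall.le).ne'
    have hlt : μ (Metric.ball o r) - ENNReal.ofReal ε < μ (Metric.ball o r) :=
      ENNReal.sub_lt_self hfin hne0 (ENNReal.ofReal_pos.2 hε).ne'
    obtain ⟨n, hn⟩ := ((tendsto_order.1 htend).1 _ hlt).exists
    exact ⟨r - r/((n:ℝ)+1), (tseq_bounds' hr n).1, (tseq_bounds' hr n).2,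
      tsub_le_iff_right.1 hn.le⟩

/-- For a boundedly compact pmm space `(X, o, μ)`: the curve of closed balls
`t ↦ B̄_t(o)` is càdlàg in the Hausdorff distance, with left limit at `r` the closure of the
open ball `B_r(o)`; and the curve `t ↦ μ|_{B̄_t(o)}` is càdlàg in the Prokhorov distance,
with left limit at `r` equal to `μ|_{B_r(o)}`. -/
theorem cadlag_balls {X : Type*} [MetricSpace X] [MeasurableSpace X] [BorelSpace X]
    (o : X) (μ : Measure X)
    (hcompact : ∀ (x : X) (r : ℝ), IsCompact (Metric.closedBall x r))
    (hfinite : ∀ (x : X) (r : ℝ), μ (Metric.closedBall x r) ≠ ⊤) :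
    (∀ r : ℝ, 0 ≤ r →
      Tendsto (fun t => Metric.hausdorffDist (Metric.closedBall o t) (Metric.closedBall o r))
        (𝓝[>] r) (𝓝 0)) ∧
    (∀ r : ℝ, 0 < r →
      Tendsto (fun t => Metric.hausdorffDist (Metric.closedBall o t) (closure (Metric.ball o r)))
        (𝓝[<] r) (𝓝 0)) ∧
    (∀ r : ℝ, 0 ≤ r →
      Tendsto (fun t => prokhorovDist (μ.restrict (Metric.closedBall o t))
        (μ.restrict (Metric.closedBall o r))) (𝓝[>] r) (𝓝 0)) ∧
    (∀ r : ℝ, 0 < r →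
      Tendsto (fun t => prokhorovDist (μ.restrict (Metric.closedBall o t))
        (μ.restrict (Metric.ball o r))) (𝓝[<] r) (𝓝 0)) := by
  refine ⟨?_, ?_, ?_, ?_⟩
  · -- right-continuity of balls
    intro r _hr
    rw [Metric.tendsto_nhds]
    intro ε hε
    obtain ⟨δ, hδ, hsub⟩ := exists_delta_subset_thickening' o hcompact r (half_pos hε)
    filter_upwards [Ioo_mem_nhdsGT_of_mem ⟨le_refl r, lt_add_of_pos_right r hδ⟩] with t ht
    rw [Real.dist_eq, sub_zero, abs_of_nonneg Metric.hausdorffDist_nonneg]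
    have hle : Metric.hausdorffDist (Metric.closedBall o t) (Metric.closedBall o r) ≤ ε/2 := by
      apply Metric.hausdorffDist_le_of_infDist (by linarith)
      · intro x hx
        obtain ⟨z, hz, hdz⟩ := Metric.mem_thickening_iff.1
          (hsub (Metric.closedBall_subset_closedBall ht.2.le hx))
        exact (Metric.infDist_le_dist_of_mem hz).trans hdz.le
      · intro x hx
        rw [Metric.infDist_zero_of_mem (Metric.closedBall_subset_closedBall ht.1.le hx)]
        linarith
    linarith
  · -- left limits of balls
    intro r hr
    rw [Metric.tendsto_nhds]
    intro ε hε
    obtain ⟨t0, _ht00, ht0r, hsub⟩ := exists_t0_closure_ball' o hcompact hr (half_pos hε)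
    filter_upwards [Ioo_mem_nhdsLT_of_mem ⟨ht0r, le_refl r⟩] with t ht
    rw [Real.dist_eq, sub_zero, abs_of_nonneg Metric.hausdorffDist_nonneg]
    have hle : Metric.hausdorffDist (Metric.closedBall o t)
        (closure (Metric.ball o r)) ≤ ε/2 := by
      apply Metric.hausdorffDist_le_of_infDist (by linarith)
      · intro x hx
        have hx' : x ∈ closure (Metric.ball o r) :=
          subset_closure (Metric.mem_ball.2 (lt_of_le_of_lt (Metric.mem_closedBall.1 hx) ht.2))
        rw [Metric.infDist_zero_of_mem hx']
        linarith
      · intro x hx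
        obtain ⟨z, hz, hdz⟩ := Metric.mem_thickening_iff.1 (hsub hx)
        exact (Metric.infDist_le_dist_of_mem
          (Metric.closedBall_subset_closedBall ht.1.le hz)).trans hdz.le
    linarith
  · -- right-continuity of restricted measures
    intro r _hr
    rw [Metric.tendsto_nhds]
    intro ε hε
    obtain ⟨δ, hδ, hμδ⟩ := exists_delta_measure' o μ hfinite r (half_pos hε)
    filter_upwards [Ioo_mem_nhdsGT_of_mem ⟨le_refl r, lt_add_of_pos_right r hδ⟩] with t ht
    rw [Real.dist_eq, sub_zero, abs_of_nonneg (prokhorovDist_nonneg' _ _)]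
    have hle : prokhorovDist (μ.restrict (Metric.closedBall o t))
        (μ.restrict (Metric.closedBall o r)) ≤ ε/2 := by
      apply prokhorovDist_le' (half_pos hε)
      intro A hA
      have hμt : μ (Metric.closedBall o t) ≤ μ (Metric.closedBall o r) + ENNReal.ofReal (ε/2) :=
        (measure_mono (Metric.closedBall_subset_closedBall ht.2.le)).trans hμδ
      exact restrict_pair' μ Metric.isClosed_closedBall.measurableSet
        Metric.isClosed_closedBall.measurableSet
        (Metric.closedBall_subset_closedBall ht.1.le) (half_pos hε) (hfinite o r) hμt A hA
    linarith
  · -- left limits of restricted measures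
    intro r hr
    rw [Metric.tendsto_nhds]
    intro ε hε
    obtain ⟨t0, _ht00, ht0r, hμt0⟩ := exists_t0_measure' o μ hfinite hr (half_pos hε)
    filter_upwards [Ioo_mem_nhdsLT_of_mem ⟨ht0r, le_refl r⟩] with t ht
    rw [Real.dist_eq, sub_zero, abs_of_nonneg (prokhorovDist_nonneg' _ _)]
    have hle : prokhorovDist (μ.restrict (Metric.closedBall o t))
        (μ.restrict (Metric.ball o r)) ≤ ε/2 := by
      apply prokhorovDist_le' (half_pos hε)
      intro A hA
      have hsub : Metric.closedBall o t ⊆ Metric.ball o r := fun x hx =>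
        Metric.mem_ball.2 (lt_of_le_of_lt (Metric.mem_closedBall.1 hx) ht.2)
      have hμb : μ (Metric.ball o r) ≤ μ (Metric.closedBall o t) + ENNReal.ofReal (ε/2) :=
        hμt0.trans (by
          gcongr
          exact ht.1.le)
      have hp := restrict_pair' μ Metric.isClosed_closedBall.measurableSet
        Metric.isOpen_ball.measurableSet hsub (half_pos hε) (hfinite o t) hμb A hA
      exact ⟨hp.2, hp.1⟩
    linarith
  end
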